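/- Let h > 0, ε > 0, and let M : [−h, 0] → S^{2n} be piecewise continuous, partitioned into n × n blocks M = [[M₁₁, M₁₂], [M₂₁, M₂₂]]. Suppose that for every continuous function y : [−h, 0] → ℝⁿ one has ∫_{−h}^{0} [y(0); y(t)]ᵀ M(t) [y(0); y(t)] dt ≥ ε ∫_{−h}^{0} ‖y(t)‖² dt. Then M₂₂(t) ⪰ ε I at every point t ∈ (−h, 0) at which M is continuous. -/

import Mathlib

/-!
Test the inequality with `y(s) = φ(s) v`, where `φ` is a narrow tent centred at `t` and vanishing
at `0`. Then `y(0) = 0` decouples the blocks `M₁₁, M₁₂, M₂₁`, and the hypothesis reads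
`ε |v|² ∫ φ² ≤ ∫ φ² vᵀ M₂₂ v`. If `vᵀ M₂₂(t) v < ε |v|²`, continuity of `M` at `t` keeps
`vᵀ M₂₂ v` below `ε |v|²` on the support of a narrow enough tent, a contradiction.
-/

open Matrix

/-- A real-valued function on `[-h,0]` is piecewise continuous if there are finitely many
points `-h < t₁ < ⋯ < t_m < 0` such that it is bounded on `[-h,0]`, continuous (within
`[-h,0]`) off these points, and has finite one-sided limits at each of them. -/
def PiecewiseCts (h : ℝ) (f : ℝ → ℝ) : Prop :=
  ∃ P : Finset ℝ, (↑P : Set ℝ) ⊆ Set.Ioo (-h) 0 ∧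
    Bornology.IsBounded (f '' Set.Icc (-h) 0) ∧
    (∀ t ∈ Set.Icc (-h) 0 \ (↑P : Set ℝ), ContinuousWithinAt f (Set.Icc (-h) 0) t) ∧
    ∀ p ∈ P, (∃ L : ℝ, Filter.Tendsto f (nhdsWithin p (Set.Iio p)) (nhds L)) ∧
      (∃ L : ℝ, Filter.Tendsto f (nhdsWithin p (Set.Ioi p)) (nhds L))

/-- The lower-right `n × n` block `M₂₂` of a matrix in `S^{2n}`. -/
def blk22 (n : ℕ) (M : Matrix (Fin (n + n)) (Fin (n + n)) ℝ) :
    Matrix (Fin n) (Fin n) ℝ :=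
  Matrix.of fun i j => M (Fin.natAdd n i) (Fin.natAdd n j)

open Set Filter Topology

def tent (t₀ δ t : ℝ) : ℝ := max 0 (δ - |t - t₀|)

section Tent

variable {t₀ δ t : ℝ}

theorem continuous_tent : Continuous (tent t₀ δ) :=
  continuous_const.max (continuous_const.sub (continuous_id.sub continuous_const).abs)

theorem tent_eq_zero (h : δ ≤ |t - t₀|) : tent t₀ δ t = 0 :=
  max_eq_left (by linarith)

theorem tent_pos (h : |t - t₀| < δ) : 0 < tent t₀ δ t :=
  lt_max_of_lt_right (by linarith)

theorem integral_sq_tent_pos {a b : ℝ} (hδ : 0 < δ) (ha : a ≤ t₀ - δ) (hb : t₀ + δ ≤ b) :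
    0 < ∫ t in a..b, tent t₀ δ t ^ 2 := by
  have hint : ∀ c d, IntervalIntegrable (fun t => tent t₀ δ t ^ 2) MeasureTheory.volume c d :=
    fun c d => (continuous_tent.pow 2).intervalIntegrable c d
  have hsupp : 0 < ∫ t in (t₀ - δ)..(t₀ + δ), tent t₀ δ t ^ 2 := by
    refine intervalIntegral.intervalIntegral_pos_of_pos_on (hint _ _) (fun t ht => ?_) (by linarith)
    exact pow_pos (tent_pos (abs_sub_lt_iff.2 ⟨by linarith [ht.2], by linarith [ht.1]⟩)) 2
  exact hsupp.trans_le <| intervalIntegral.integral_mono_interval ha (by linarith) hb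
    (Eventually.of_forall fun _ => sq_nonneg _) (hint a b)

end Tent

theorem le_of_forall_integral_sq_mul_le {g : ℝ → ℝ} {a b t₀ c : ℝ} (hc : 0 < c)
    (ht₀ : t₀ ∈ Ioo a b) (hg : ContinuousWithinAt g (Icc a b) t₀)
    (H : ∀ φ : ℝ → ℝ, Continuous φ → φ b = 0 →
      c * ∫ t in a..b, φ t ^ 2 ≤ ∫ t in a..b, φ t ^ 2 * g t) :
    c ≤ g t₀ := by
  by_contra! hlt
  obtain ⟨K, hgK, hKc⟩ := exists_between hlt
  obtain ⟨δ₀, hδ₀, hδ₀g⟩ : ∃ δ₀ > 0, ∀ t, dist t t₀ < δ₀ → t ∈ Icc a b → g t < K := by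
    have := hg.eventually (Iio_mem_nhds hgK)
    rwa [eventually_nhdsWithin_iff, Metric.eventually_nhds_iff] at this
  set δ := min δ₀ (min (t₀ - a) (b - t₀))
  have hδ : 0 < δ := lt_min hδ₀ (lt_min (by linarith [ht₀.1]) (by linarith [ht₀.2]))
  have hδa : δ ≤ t₀ - a := (min_le_right _ _).trans (min_le_left _ _)
  have hδb : δ ≤ b - t₀ := (min_le_right _ _).trans (min_le_right _ _)
  have hI := integral_sq_tent_pos (t₀ := t₀) (a := a) (b := b) hδ (by linarith) (by linarith)
  have hφ := H (tent t₀ δ) continuous_tent (tent_eq_zero (by rw [abs_of_nonneg] <;> linarith))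
  by_cases hint : IntervalIntegrable (fun t => tent t₀ δ t ^ 2 * g t) MeasureTheory.volume a b
  · have hbound : ∫ t in a..b, tent t₀ δ t ^ 2 * g t ≤ ∫ t in a..b, tent t₀ δ t ^ 2 * K := by
      refine intervalIntegral.integral_mono_on (by linarith [ht₀.1, ht₀.2]) hint
        (((continuous_tent.pow 2).mul continuous_const).intervalIntegrable _ _) fun t ht => ?_
      rcases lt_or_ge |t - t₀| δ with hnear | hfar
      · exact mul_le_mul_of_nonneg_left
          (hδ₀g t (hnear.trans_le (min_le_left _ _)) ht).le (sq_nonneg _)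
      · simp [tent_eq_zero hfar]
    rw [intervalIntegral.integral_mul_const] at hbound
    nlinarith
  · -- the junk value `0` of a non-integrable integral still contradicts `0 < c * ∫ φ²`
    rw [intervalIntegral.integral_undef hint] at hφ
    nlinarith

theorem sum_smul_sq {ι R : Type*} [Fintype ι] [CommRing R] (c : R) (x : ι → R) :
    ∑ i, (c • x) i ^ 2 = c ^ 2 * (x ⬝ᵥ x) := by
  rw [dotProduct, Finset.mul_sum]
  exact Finset.sum_congr rfl fun i _ => by rw [Pi.smul_apply, smul_eq_mul]; ring

theorem append_zero_dotProduct_mulVec (n : ℕ) (w : Fin n → ℝ)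
    (A : Matrix (Fin (n + n)) (Fin (n + n)) ℝ) :
    Fin.append (0 : Fin n → ℝ) w ⬝ᵥ A *ᵥ Fin.append (0 : Fin n → ℝ) w
      = w ⬝ᵥ blk22 n A *ᵥ w := by
  have happend : ∀ i : Fin n, Fin.append (0 : Fin n → ℝ) w (Fin.addNat i n) = w i := fun i => by
    rw [← Fin.natAdd_eq_addNat]
    exact Fin.append_right _ _ _
  simp [dotProduct, mulVec, blk22, Fin.sum_univ_add, Fin.append_left, happend]

theorem continuousWithinAt_blk22 {n : ℕ} {M : ℝ → Matrix (Fin (n + n)) (Fin (n + n)) ℝ}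
    {s : Set ℝ} {t : ℝ} (hM : ∀ i j, ContinuousWithinAt (fun s => M s i j) s t) :
    ContinuousWithinAt (fun s => blk22 n (M s)) s t :=
  continuousWithinAt_pi.2 fun _ => continuousWithinAt_pi.2 fun _ => hM _ _

theorem isSymm_blk22 {n : ℕ} {A : Matrix (Fin (n + n)) (Fin (n + n)) ℝ} (hA : A.IsSymm) :
    (blk22 n A).IsSymm :=
  hA.submatrix (Fin.natAdd n)

theorem statement5_general (n : ℕ) (h ε : ℝ) (hε : 0 < ε)
    (M : ℝ → Matrix (Fin (n + n)) (Fin (n + n)) ℝ)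
    (hMsymm : ∀ t ∈ Set.Icc (-h) 0, (M t).IsSymm)
    (hyp : ∀ y : ℝ → Fin n → ℝ, ContinuousOn y (Set.Icc (-h) 0) →
      ε * (∫ t in (-h)..0, ∑ i, y t i ^ 2) ≤
        ∫ t in (-h)..0,
          Fin.append (y 0) (y t) ⬝ᵥ (M t).mulVec (Fin.append (y 0) (y t))) :
    ∀ t ∈ Set.Ioo (-h) 0,
      (∀ i j, ContinuousWithinAt (fun s => M s i j) (Set.Icc (-h) 0) t) →
      (blk22 n (M t) - ε • (1 : Matrix (Fin n) (Fin n) ℝ)).PosSemidef := by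
  intro t₀ ht₀ hcont
  refine posSemidef_iff_dotProduct_mulVec.2 ⟨isHermitian_iff_isSymm.2 <|
    (isSymm_blk22 (hMsymm t₀ (Ioo_subset_Icc_self ht₀))).sub (isSymm_one.smul ε), fun x => ?_⟩
  rw [star_trivial, sub_mulVec, smul_mulVec, one_mulVec, dotProduct_sub, dotProduct_smul,
    smul_eq_mul, sub_nonneg]
  rcases eq_or_ne x 0 with rfl | hx
  · simp
  refine le_of_forall_integral_sq_mul_le (g := fun t => x ⬝ᵥ blk22 n (M t) *ᵥ x)
    (mul_pos hε (by simpa using dotProduct_self_star_pos_iff.2 hx)) ht₀ ?_ fun φ hφ hφ0 => ?_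
  · exact (continuous_const.dotProduct (continuous_id.matrix_mulVec continuous_const)
      ).continuousAt.comp_continuousWithinAt (continuousWithinAt_blk22 hcont)
  · have hquad : ∀ t, Fin.append (φ 0 • x) (φ t • x) ⬝ᵥ M t *ᵥ Fin.append (φ 0 • x) (φ t • x)
        = φ t ^ 2 * (x ⬝ᵥ blk22 n (M t) *ᵥ x) := fun t => by
      rw [hφ0, zero_smul, append_zero_dotProduct_mulVec, mulVec_smul, dotProduct_smul,
        smul_dotProduct, smul_eq_mul, smul_eq_mul, sq, mul_assoc]
    have := hyp (fun t => φ t • x) (hφ.smul continuous_const).continuousOn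
    simp only [sum_smul_sq, hquad, intervalIntegral.integral_mul_const] at this
    linarith

/-- Let `h, ε > 0` and let `M : [-h,0] → S^{2n}` be piecewise continuous.
If `∫_{-h}^0 [y(0); y(t)]ᵀ M(t) [y(0); y(t)] dt ≥ ε ∫_{-h}^0 ‖y(t)‖² dt` for every
continuous `y : [-h,0] → ℝⁿ`, then `M₂₂(t) ⪰ ε I` at every point `t ∈ (-h,0)` at which
`M` is continuous. -/
theorem statement5 (n : ℕ) (h ε : ℝ) (hh : 0 < h) (hε : 0 < ε)
    (M : ℝ → Matrix (Fin (n + n)) (Fin (n + n)) ℝ)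
    (hMsymm : ∀ t ∈ Set.Icc (-h) 0, (M t).IsSymm)
    (hMpc : ∀ i j, PiecewiseCts h fun t => M t i j)
    (hyp : ∀ y : ℝ → Fin n → ℝ, ContinuousOn y (Set.Icc (-h) 0) →
      ε * (∫ t in (-h)..0, ∑ i, y t i ^ 2) ≤
        ∫ t in (-h)..0,
          Fin.append (y 0) (y t) ⬝ᵥ (M t).mulVec (Fin.append (y 0) (y t))) :
    ∀ t ∈ Set.Ioo (-h) 0,
      (∀ i j, ContinuousWithinAt (fun s => M s i j) (Set.Icc (-h) 0) t) →
      (blk22 n (M t) - ε • (1 : Matrix (Fin n) (Fin n) ℝ)).PosSemidef :=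
  statement5_general n h ε hε M hMsymm hyp
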